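/- Let N be a matroid of rank 2 without loops and L ⊆ E(N) with |L| = 2 such that L is independent. Then there is a biased graph Ω with F(Ω) isomorphic to N in which both elements of L are unbalanced loops. -/

import Mathlib

open Set

/-! ### Matroid core -/

namespace Matroid

variable {α : Type*}

/-- A circuit: a minimal dependent set. -/
def Circuit' (M : Matroid α) (C : Set α) : Prop :=
  M.Dep C ∧ ∀ D, D ⊂ C → M.Indep D

/-- A matroid is connected if its ground set is nonempty and every two distinct
elements lie in a common circuit. -/
def Connected' (M : Matroid α) : Prop :=
  M.E.Nonempty ∧ ∀ e ∈ M.E, ∀ f ∈ M.E, e ≠ f → ∃ C, M.Circuit' C ∧ e ∈ C ∧ f ∈ C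

/-- Deletion of a set of elements. -/
def del (M : Matroid α) (D : Set α) : Matroid α := M ↾ (M.E \ D)

/-- Contraction of a set of elements. -/
def con (M : Matroid α) (C : Set α) : Matroid α := (M✶.del C)✶

/-- `N` is a minor of `M`. -/
def IsMinor' (N M : Matroid α) : Prop :=
  ∃ C D : Set α, Disjoint C D ∧ C ⊆ M.E ∧ D ⊆ M.E ∧ N = (M.con C).del D

def IsStrictMinor' (N M : Matroid α) : Prop := N.IsMinor' M ∧ N ≠ M

/-- The rank (as an extended natural number) of a set in a matroid. -/
noncomputable def eRk' (M : Matroid α) (X : Set α) : ℕ∞ :=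
  ⨆ I : {I : Set α // M.Indep I ∧ I ⊆ X}, I.1.encard

/-- A cocircuit is a circuit of the dual matroid. -/
def Cocircuit' (M : Matroid α) (K : Set α) : Prop := M✶.Circuit' K

/-- A loop is a one-element circuit. -/
def IsLoopElem (M : Matroid α) (e : α) : Prop := M.Circuit' {e}

end Matroid

/-! ### Biased graph core -/

universe u v

/-- A multigraph, given by assigning two (possibly equal) endpoints to each edge. -/
structure MultiGraph (V : Type u) (E : Type v) where
  fst : E → V
  snd : E → V

namespace MultiGraph

variable {V : Type u} {E : Type v} (G : MultiGraph V E)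

/-- Vertex `v` is incident with edge `e`. -/
def Inc (v : V) (e : E) : Prop := G.fst e = v ∨ G.snd e = v

/-- `e` is a loop. -/
def IsLoopEdge (e : E) : Prop := G.fst e = G.snd e

/-- `e` is a link (an edge with two distinct endpoints). -/
def IsLink (e : E) : Prop := G.fst e ≠ G.snd e

/-- The set of vertices incident with an edge in `X`. -/
def VSet (X : Set E) : Set V := {v | ∃ e ∈ X, G.Inc v e}

/-- The degree of `v` in the edge set `X` (loops count twice). -/
noncomputable def deg (X : Set E) (v : V) : ℕ :=
  {e | e ∈ X ∧ G.fst e = v}.ncard + {e | e ∈ X ∧ G.snd e = v}.ncard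

/-- Two edges of `X` are adjacent if they share a vertex. -/
def EdgeAdj (X : Set E) (e f : E) : Prop := e ∈ X ∧ f ∈ X ∧ ∃ v, G.Inc v e ∧ G.Inc v f

/-- The subgraph induced by the edge set `X` is connected. -/
def ConnectedOn (X : Set E) : Prop :=
  ∀ ⦃e f⦄, e ∈ X → f ∈ X → Relation.ReflTransGen (G.EdgeAdj X) e f

/-- An edge set is a cycle if it is finite, nonempty, connected and every
incident vertex has degree exactly two. -/
def IsCycle (C : Set E) : Prop :=
  C.Finite ∧ C.Nonempty ∧ G.ConnectedOn C ∧ ∀ v ∈ G.VSet C, G.deg C v = 2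

/-- The ends of an edge set: its vertices of degree one. -/
def Ends (P : Set E) : Set V := {v | v ∈ G.VSet P ∧ G.deg P v = 1}

/-- An edge set is a path if it is finite, nonempty, connected, has maximum degree
two and exactly two vertices of degree one. -/
def IsPath (P : Set E) : Prop :=
  P.Finite ∧ P.Nonempty ∧ G.ConnectedOn P ∧ (∀ v ∈ G.VSet P, G.deg P v ≤ 2) ∧
    (G.Ends P).ncard = 2

/-- `C` is (the edge set of) a connected component of the subgraph induced by `X`. -/
def IsComponentOf (C X : Set E) : Prop :=
  ∃ e ∈ X, C = {f | f ∈ X ∧ Relation.ReflTransGen (G.EdgeAdj X) e f}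

end MultiGraph

/-- A biased graph: a multigraph with a distinguished collection of "balanced" edge sets. -/
structure BiasedGraph (V : Type u) (E : Type v) extends MultiGraph V E where
  Balanced : Set (Set E)

namespace BiasedGraph

variable {V : Type u} {E : Type v} (Ω : BiasedGraph V E)

/-- The theta property: every balanced set is a cycle, and no theta subgraph
(a union of two cycles whose symmetric difference is a cycle) contains
exactly two balanced cycles. -/
def ThetaProperty : Prop :=
  (∀ C ∈ Ω.Balanced, Ω.toMultiGraph.IsCycle C) ∧
  ∀ C₁ C₂ C₃ : Set E, Ω.toMultiGraph.IsCycle C₁ → Ω.toMultiGraph.IsCycle C₂ →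
    Ω.toMultiGraph.IsCycle C₃ → C₃ = symmDiff C₁ C₂ →
    C₁ ∈ Ω.Balanced → C₂ ∈ Ω.Balanced → C₃ ∈ Ω.Balanced

def IsBalancedCycle (C : Set E) : Prop := Ω.toMultiGraph.IsCycle C ∧ C ∈ Ω.Balanced

def IsUnbalancedCycle (C : Set E) : Prop := Ω.toMultiGraph.IsCycle C ∧ C ∉ Ω.Balanced

/-- The subgraph induced by `X` is balanced: every cycle inside it is balanced. -/
def BalancedOn (X : Set E) : Prop :=
  ∀ C ⊆ X, Ω.toMultiGraph.IsCycle C → C ∈ Ω.Balanced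

/-- A contrabalanced theta subgraph: all three of its cycles are unbalanced. -/
def IsContraTheta (T : Set E) : Prop :=
  ∃ C₁ C₂ C₃ : Set E, Ω.IsUnbalancedCycle C₁ ∧ Ω.IsUnbalancedCycle C₂ ∧
    Ω.IsUnbalancedCycle C₃ ∧ C₃ = symmDiff C₁ C₂ ∧ T = C₁ ∪ C₂

/-- Tight handcuffs: two edge-disjoint unbalanced cycles meeting in exactly one vertex. -/
def IsTightHandcuff (H : Set E) : Prop :=
  ∃ C₁ C₂ : Set E, Ω.IsUnbalancedCycle C₁ ∧ Ω.IsUnbalancedCycle C₂ ∧ Disjoint C₁ C₂ ∧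
    (∃ v, Ω.toMultiGraph.VSet C₁ ∩ Ω.toMultiGraph.VSet C₂ = {v}) ∧ H = C₁ ∪ C₂

/-- Loose handcuffs: two vertex-disjoint unbalanced cycles joined by a path meeting
them only in its two ends. -/
def IsLooseHandcuff (H : Set E) : Prop :=
  ∃ C₁ C₂ P : Set E, Ω.IsUnbalancedCycle C₁ ∧ Ω.IsUnbalancedCycle C₂ ∧
    Disjoint (Ω.toMultiGraph.VSet C₁) (Ω.toMultiGraph.VSet C₂) ∧
    Ω.toMultiGraph.IsPath P ∧ Disjoint P (C₁ ∪ C₂) ∧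
    (∃ a b, a ≠ b ∧ Ω.toMultiGraph.Ends P = {a, b} ∧
      Ω.toMultiGraph.VSet P ∩ Ω.toMultiGraph.VSet C₁ = {a} ∧
      Ω.toMultiGraph.VSet P ∩ Ω.toMultiGraph.VSet C₂ = {b}) ∧
    H = C₁ ∪ C₂ ∪ P

/-- The circuits of the frame matroid of a biased graph. -/
def FrameCircuit (X : Set E) : Prop :=
  Ω.IsBalancedCycle X ∨ Ω.IsContraTheta X ∨ Ω.IsTightHandcuff X ∨ Ω.IsLooseHandcuff X

end BiasedGraph

/-- A biased graph (on the ground set of `M`) represents the matroid `M`: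
it satisfies the theta property and the circuits of `M` are exactly its frame circuits. -/
def BiasedGraph.Represents {V : Type u} {α : Type v} (M : Matroid α)
    (Ω : BiasedGraph V ↥M.E) : Prop :=
  Ω.ThetaProperty ∧ ∀ X : Set ↥M.E, M.Circuit' (Subtype.val '' X) ↔ Ω.FrameCircuit X

/-- A matroid is frame if some biased graph represents it. -/
def Matroid.IsFrame {α : Type v} (M : Matroid α) : Prop :=
  ∃ (V : Type v) (Ω : BiasedGraph V ↥M.E), BiasedGraph.Represents M Ω

/-- A matroidal `(M, L)` is frame if some biased graph representing `M` has all
elements of `L` as unbalanced loops. -/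
def Matroid.IsFrameMatroidal {α : Type v} (M : Matroid α) (L : Set α) : Prop :=
  ∃ (V : Type v) (Ω : BiasedGraph V ↥M.E), BiasedGraph.Represents M Ω ∧
    ∀ e : ↥M.E, e.1 ∈ L → Ω.toMultiGraph.IsLoopEdge e ∧ {e} ∉ Ω.Balanced

/-!
In a loopless matroid of rank two the circuits are the pairs of parallel elements and the
triples of pairwise non-parallel elements. Take two vertices `u`, `v`; make the parallel class
of `a` a bouquet of loops at `u`, the class of `b` a bouquet of loops at `v`, every other
element a `u`–`v` link, and call a digon balanced when its two links are parallel. The frame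
circuits of this biased graph are of the same two kinds: two loops at one vertex or a balanced
digon (parallel pairs), and a loop with an unbalanced digon, a contrabalanced theta of three
links, or two loops at different vertices joined by a link (non-parallel triples).
-/

/-- The circuits of a loopless rank-two matroid in which `r` is "equal or parallel"; for
reflexive `r` the three elements of a triple are distinct. -/
def IsRankTwoCircuit {E : Type*} (r : E → E → Prop) (X : Set E) : Prop :=
  (∃ e f, e ≠ f ∧ r e f ∧ X = {e, f}) ∨ ∃ e f g, ¬ r e f ∧ ¬ r e g ∧ ¬ r f g ∧ X = {e, f, g}

namespace Matroid

variable {α : Type*} {M : Matroid α}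

theorem Indep.encard_le_eRk' {I X : Set α} (hI : M.Indep I) (hIX : I ⊆ X) :
    I.encard ≤ M.eRk' X :=
  le_iSup (fun J : {J : Set α // M.Indep J ∧ J ⊆ X} => J.1.encard) ⟨I, hI, hIX⟩

theorem not_indep_pair_trans {x y z : α} (hy : M.Indep {y}) (hxz : x ≠ z)
    (hxy : ¬ M.Indep {x, y}) (hyz : ¬ M.Indep {y, z}) : ¬ M.Indep {x, z} := by
  intro hxz'
  obtain ⟨w, ⟨rfl | rfl, -⟩, hw⟩ :=
    hy.augment hxz' (by rw [encard_singleton, encard_pair hxz]; norm_num)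
  · exact hxy hw
  · exact hyz (by rwa [pair_comm])

theorem indep_of_encard_le_one (hl : ∀ e ∈ M.E, M.Indep {e}) {X : Set α} (hXE : X ⊆ M.E)
    (hX : X.encard ≤ 1) : M.Indep X := by
  obtain rfl | ⟨x, rfl⟩ := encard_le_one_iff_eq.mp hX
  exacts [M.empty_indep, hl x (hXE rfl)]

theorem circuit'_iff_isCircuit {C : Set α} : M.Circuit' C ↔ M.IsCircuit C :=
  ⟨fun h => isCircuit_iff_forall_ssubset.mpr ⟨h.1, fun I hI => h.2 I hI⟩,
    fun h => ⟨h.dep, fun _ hD => h.ssubset_indep hD⟩⟩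

def Parallel' (M : Matroid α) (e f : M.E) : Prop := e = f ∨ ¬ M.Indep {e.1, f.1}

theorem not_parallel'_iff {e f : M.E} : ¬ M.Parallel' e f ↔ e ≠ f ∧ M.Indep {e.1, f.1} := by
  simp [Parallel']

theorem parallel'_equivalence (hl : ∀ e ∈ M.E, M.Indep {e}) : Equivalence M.Parallel' where
  refl _ := .inl rfl
  symm := by
    rintro e f (rfl | h)
    exacts [.inl rfl, .inr (by rwa [pair_comm])]
  trans := by
    rintro e f g (rfl | hef) (rfl | hfg)
    · exact .inl rfl
    · exact .inr hfg
    · exact .inr hef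
    · by_cases heg : e = g
      · exact .inl heg
      · exact .inr (not_indep_pair_trans (hl f f.2) (Subtype.val_injective.ne heg) hef hfg)

theorem isRankTwoCircuit_of_isCircuit (hr : ∀ I, M.Indep I → I.encard ≤ 2)
    (hl : ∀ e ∈ M.E, M.Indep {e}) {X : Set M.E} (hX : M.IsCircuit (Subtype.val '' X)) :
    IsRankTwoCircuit M.Parallel' X := by
  have hcard : (Subtype.val '' X).encard = X.encard := Subtype.val_injective.encard_image X
  obtain ⟨y, hy⟩ := hX.nonempty
  have hle : X.encard ≤ 2 + 1 := by
    rw [← hcard, ← encard_sdiff_singleton_add_one hy]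
    exact add_le_add_left (hr _ (hX.sdiff_singleton_indep hy)) 1
  have hgt : 1 < X.encard := lt_of_not_ge fun h =>
    hX.not_indep (indep_of_encard_le_one hl hX.subset_ground (hcard ▸ h))
  rcases hle.lt_or_eq with hlt | h3
  · obtain ⟨e, f, hef, rfl⟩ :=
      encard_eq_two.mp (le_antisymm (Order.le_of_lt_add_one hlt) (Order.add_one_le_of_lt hgt))
    refine .inl ⟨e, f, hef, .inr ?_, rfl⟩
    simpa [image_insert_eq] using hX.not_indep
  · obtain ⟨e, f, g, hef, heg, hfg, rfl⟩ := encard_eq_three.mp h3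
    have hind : ∀ {x y z : M.E}, x ∈ ({e, f, g} : Set M.E) → y ∈ ({e, f, g} : Set M.E) →
        z ∈ ({e, f, g} : Set M.E) → x ≠ z → y ≠ z → M.Indep {x.1, y.1} :=
      fun hx hy hz hxz hyz => (hX.sdiff_singleton_indep (mem_image_of_mem _ hz)).subset
        (pair_subset ⟨mem_image_of_mem _ hx, Subtype.val_injective.ne hxz⟩
          ⟨mem_image_of_mem _ hy, Subtype.val_injective.ne hyz⟩)
    refine .inr ⟨e, f, g,
      not_parallel'_iff.mpr ⟨hef, hind (z := g) (by simp) (by simp) (by simp) heg hfg⟩,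
      not_parallel'_iff.mpr ⟨heg, hind (z := f) (by simp) (by simp) (by simp) hef hfg.symm⟩,
      not_parallel'_iff.mpr ⟨hfg, hind (z := e) (by simp) (by simp) (by simp) hef.symm heg.symm⟩,
      rfl⟩

theorem isCircuit_of_isRankTwoCircuit (hr : ∀ I, M.Indep I → I.encard ≤ 2)
    (hl : ∀ e ∈ M.E, M.Indep {e}) {X : Set M.E} (hX : IsRankTwoCircuit M.Parallel' X) :
    M.IsCircuit (Subtype.val '' X) := by
  have hXE : Subtype.val '' X ⊆ M.E := image_subset_iff.mpr fun e _ => e.2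
  rw [isCircuit_iff_dep_forall_sdiff_singleton_indep]
  rcases hX with ⟨e, f, hef, hpar, rfl⟩ | ⟨e, f, g, hef, heg, hfg, rfl⟩
  · rw [image_pair] at hXE ⊢
    refine ⟨⟨hpar.resolve_left hef, hXE⟩, fun y hy => indep_of_encard_le_one hl
      (sdiff_subset.trans hXE) ?_⟩
    rw [encard_sdiff_singleton_of_mem hy, encard_pair (Subtype.val_injective.ne hef)]
    norm_num
  · obtain ⟨hef, ief⟩ := not_parallel'_iff.mp hef
    obtain ⟨heg, ieg⟩ := not_parallel'_iff.mp heg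
    obtain ⟨hfg, ifg⟩ := not_parallel'_iff.mp hfg
    have h3 : (Subtype.val '' {e, f, g}).encard = 3 := by
      rw [Subtype.val_injective.encard_image]
      exact encard_eq_three.mpr ⟨e, f, g, hef, heg, hfg, rfl⟩
    rw [image_insert_eq, image_insert_eq, image_singleton] at hXE h3 ⊢
    refine ⟨⟨fun hi => ?_, hXE⟩, fun y hy => ?_⟩
    · have := h3 ▸ hr _ hi
      norm_num at this
    · rcases hy with rfl | rfl | rfl
      · exact ifg.subset (sdiff_singleton_subset_iff.mpr subset_rfl)
      · exact ieg.subset (sdiff_singleton_subset_iff.mpr (insert_comm _ _ _).subset)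
      · exact ief.subset (sdiff_singleton_subset_iff.mpr (by simp [insert_subset_iff]))

theorem circuit'_image_iff (hr : ∀ I, M.Indep I → I.encard ≤ 2) (hl : ∀ e ∈ M.E, M.Indep {e})
    (X : Set M.E) : M.Circuit' (Subtype.val '' X) ↔ IsRankTwoCircuit M.Parallel' X := by
  rw [circuit'_iff_isCircuit]
  exact ⟨isRankTwoCircuit_of_isCircuit hr hl, isCircuit_of_isRankTwoCircuit hr hl⟩

end Matroid

theorem Set.exists_eq_pair_of_ncard_symmDiff {γ : Type*} {C₁ C₂ : Set γ} (h₁ : C₁.ncard = 2)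
    (h₂ : C₂.ncard = 2) (h₃ : (symmDiff C₁ C₂).ncard = 2) :
    ∃ w x y, x ≠ w ∧ y ≠ w ∧ x ≠ y ∧ C₁ = {w, x} ∧ C₂ = {w, y} ∧ symmDiff C₁ C₂ = {x, y} := by
  obtain ⟨w, hw₁, hw₂⟩ : (C₁ ∩ C₂).Nonempty := by
    rw [← not_disjoint_iff_nonempty_inter]
    intro hdisj
    rw [hdisj.symmDiff_eq_sup] at h₃
    change (C₁ ∪ C₂).ncard = 2 at h₃
    rw [ncard_union_eq hdisj (finite_of_ncard_pos (by omega)) (finite_of_ncard_pos (by omega)),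
      h₁, h₂] at h₃
    omega
  have eq_pair : ∀ {C : Set γ}, C.ncard = 2 → w ∈ C → ∃ x, x ≠ w ∧ C = {w, x} := by
    intro C hC hwC
    obtain ⟨p, q, hpq, rfl⟩ := ncard_eq_two.mp hC
    rcases hwC with rfl | rfl
    exacts [⟨q, hpq.symm, rfl⟩, ⟨p, hpq, pair_comm _ _⟩]
  obtain ⟨x, hxw, rfl⟩ := eq_pair h₁ hw₁
  obtain ⟨y, hyw, rfl⟩ := eq_pair h₂ hw₂
  have hxy : x ≠ y := by
    rintro rfl
    simp at h₃
  refine ⟨w, x, y, hxw, hyw, hxy, rfl, rfl, ?_⟩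
  ext z
  simp only [mem_symmDiff, mem_insert_iff, mem_singleton_iff]
  grind

theorem Set.pair_eq_univ {V : Type*} (hV : ∀ w₁ w₂ w₃ : V, w₁ = w₂ ∨ w₁ = w₃ ∨ w₂ = w₃)
    {u v : V} (huv : u ≠ v) : ({u, v} : Set V) = univ :=
  eq_univ_of_forall fun w => (hV w u v).imp_right (Or.resolve_right · huv)

theorem ULift.bool_eq_or_eq_or_eq (w₁ w₂ w₃ : ULift Bool) : w₁ = w₂ ∨ w₁ = w₃ ∨ w₂ = w₃ := by
  rcases w₁ with ⟨_ | _⟩ <;> rcases w₂ with ⟨_ | _⟩ <;> rcases w₃ with ⟨_ | _⟩ <;> simp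

namespace MultiGraph

variable {V E : Type*} (G : MultiGraph V E) {e : E} {C X : Set E}

theorem vSet_singleton (e : E) : G.VSet {e} = {G.fst e, G.snd e} := by
  ext v
  simp [VSet, Inc, eq_comm]

theorem vSet_singleton_of_isLoopEdge (he : G.IsLoopEdge e) : G.VSet {e} = {G.fst e} := by
  rw [vSet_singleton, ← he, pair_eq_singleton]

theorem deg_singleton_of_isLoopEdge (he : G.IsLoopEdge e) : G.deg {e} (G.fst e) = 2 := by
  have h : ∀ p : E → Prop, p e → {x | x ∈ ({e} : Set E) ∧ p x}.ncard = 1 := fun p hp =>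
    ncard_eq_one.mpr ⟨e, by ext x; simp +contextual [hp]⟩
  exact congrArg₂ (· + ·) (h (G.fst · = G.fst e) rfl) (h (G.snd · = G.fst e) he.symm)

theorem isCycle_singleton (he : G.IsLoopEdge e) : G.IsCycle {e} := by
  refine ⟨finite_singleton e, singleton_nonempty e, ?_, ?_⟩
  · rintro f g rfl rfl
    exact .refl
  · intro v hv
    rw [vSet_singleton_of_isLoopEdge G he, mem_singleton_iff] at hv
    rw [hv, deg_singleton_of_isLoopEdge G he]

theorem IsCycle.eq_singleton_of_isLoopEdge {G : MultiGraph V E} (hC : G.IsCycle C) (heC : e ∈ C)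
    (he : G.IsLoopEdge e) : C = {e} := by
  -- the loop alone has degree two at its vertex, so no other edge of `C` meets `e`
  obtain ⟨hfin, -, hconn, hdeg⟩ := hC
  have hd := hdeg (G.fst e) ⟨e, heC, Or.inl rfl⟩
  have hpos : ∀ p : E → Prop, p e → 0 < {x | x ∈ C ∧ p x}.ncard := fun p hp =>
    (ncard_pos (hfin.subset fun _ h => h.1)).mpr ⟨e, heC, hp⟩
  have h₁ := hpos (G.fst · = G.fst e) rfl
  have h₂ := hpos (G.snd · = G.fst e) he.symm
  unfold deg at hd
  have uniq : ∀ p : E → Prop, {x | x ∈ C ∧ p x}.ncard ≤ 1 → p e → ∀ f ∈ C, p f → f = e :=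
    fun p hp hpe f hfC hpf =>
      (ncard_le_one_iff (hfin.subset fun _ h => h.1)).mp hp ⟨hfC, hpf⟩ ⟨heC, hpe⟩
  have hadj : ∀ f, G.EdgeAdj C e f → f = e := by
    rintro f ⟨-, hfC, w, hwe, hwf | hwf⟩ <;>
      obtain rfl : w = G.fst e := by rcases hwe with h | h <;> [exact h.symm; exact h ▸ he.symm]
    · exact uniq (G.fst · = G.fst e) (by omega) rfl f hfC hwf
    · exact uniq (G.snd · = G.fst e) (by omega) he.symm f hfC hwf
  refine Set.eq_singleton_iff_unique_mem.mpr ⟨heC, fun f hf => ?_⟩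
  have hef := hconn heC hf
  clear hf
  induction hef with
  | refl => rfl
  | tail _ hgf ih => exact hadj _ (ih ▸ hgf)

theorem IsCycle.not_isLoopEdge_of_isCycle_symmDiff {G : MultiGraph V E} {C₁ C₂ : Set E}
    (h₁ : G.IsCycle C₁) (h₂ : G.IsCycle C₂) (h₃ : G.IsCycle (symmDiff C₁ C₂)) (he₁ : e ∈ C₁) :
    ¬ G.IsLoopEdge e := by
  intro he
  have hC₁ := h₁.eq_singleton_of_isLoopEdge he₁ he
  by_cases he₂ : e ∈ C₂
  · rw [hC₁, h₂.eq_singleton_of_isLoopEdge he₂ he, symmDiff_self] at h₃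
    exact not_nonempty_empty h₃.2.1
  · have hC₃ := h₃.eq_singleton_of_isLoopEdge (mem_symmDiff.mpr (.inl ⟨he₁, he₂⟩)) he
    have : C₂ = ∅ := by
      rw [← symmDiff_symmDiff_cancel_left C₁ C₂, hC₃, hC₁, symmDiff_self, bot_eq_empty]
    exact h₂.2.1.ne_empty this

section TwoVertices

variable (hV : ∀ w₁ w₂ w₃ : V, w₁ = w₂ ∨ w₁ = w₃ ∨ w₂ = w₃)
include hV

theorem IsLink.eq_or_eq {G : MultiGraph V E} (he : G.IsLink e) (w : V) :
    w = G.fst e ∨ w = G.snd e :=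
  (hV w (G.fst e) (G.snd e)).imp_right (Or.resolve_right · he)

theorem inc_of_isLink (he : G.IsLink e) (w : V) : G.Inc w e :=
  (he.eq_or_eq hV w).imp Eq.symm Eq.symm

theorem mem_vSet_of_isLink (he : G.IsLink e) (heX : e ∈ X) (w : V) : w ∈ G.VSet X :=
  ⟨e, heX, G.inc_of_isLink hV he w⟩

theorem deg_eq_ncard_of_forall_isLink (hX : X.Finite) (hlink : ∀ e ∈ X, G.IsLink e) (w : V) :
    G.deg X w = X.ncard := by
  have hsnd : {e | e ∈ X ∧ G.snd e = w} = X \ {e | G.fst e = w} := by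
    ext e
    refine ⟨fun ⟨heX, hw⟩ => ⟨heX, fun h => hlink e heX (h.trans hw.symm)⟩,
      fun ⟨heX, hw⟩ => ⟨heX, ?_⟩⟩
    exact (((hlink e heX).eq_or_eq hV w).resolve_left (Ne.symm hw)).symm
  rw [deg, hsnd]
  exact ncard_inter_add_ncard_sdiff_eq_ncard X _ hX

theorem deg_add_deg_eq_two_mul_ncard (hX : X.Finite) {u v : V} (huv : u ≠ v) :
    G.deg X u + G.deg X v = 2 * X.ncard := by
  have split : ∀ f : E → V,
      {e | e ∈ X ∧ f e = u}.ncard + {e | e ∈ X ∧ f e = v}.ncard = X.ncard := by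
    intro f
    have hv : {e | e ∈ X ∧ f e = v} = X \ {e | f e = u} := by
      ext e
      refine ⟨fun ⟨heX, he⟩ => ⟨heX, fun h => huv (h.symm.trans he)⟩, fun ⟨heX, he⟩ => ⟨heX, ?_⟩⟩
      exact ((hV (f e) u v).resolve_left he).resolve_right huv
    rw [hv]
    exact ncard_inter_add_ncard_sdiff_eq_ncard X _ hX
  have := split G.fst
  have := split G.snd
  unfold deg
  omega

theorem IsCycle.ncard_eq_two {G : MultiGraph V E} (hC : G.IsCycle C)
    (hlink : ∀ e ∈ C, G.IsLink e) : C.ncard = 2 := by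
  obtain ⟨hfin, ⟨e, heC⟩, -, hdeg⟩ := hC
  rw [← deg_eq_ncard_of_forall_isLink G hV hfin hlink (G.fst e)]
  exact hdeg _ ⟨e, heC, Or.inl rfl⟩

theorem isCycle_pair {f : E} (hef : e ≠ f) (he : G.IsLink e) (hf : G.IsLink f) :
    G.IsCycle {e, f} := by
  have hlink : ∀ x ∈ ({e, f} : Set E), G.IsLink x := by rintro x (rfl | rfl) <;> assumption
  refine ⟨toFinite _, insert_nonempty e {f}, fun x y hx hy => .single ?_, fun w _ => ?_⟩
  · exact ⟨hx, hy, G.fst x, Or.inl rfl, G.inc_of_isLink hV (hlink y hy) _⟩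
  · rw [deg_eq_ncard_of_forall_isLink G hV (toFinite _) hlink, ncard_pair hef]

theorem isCycle_iff : G.IsCycle C ↔ (∃ e, G.IsLoopEdge e ∧ C = {e}) ∨
    ∃ e f, e ≠ f ∧ G.IsLink e ∧ G.IsLink f ∧ C = {e, f} := by
  refine ⟨fun hC => ?_, ?_⟩
  · by_cases hloop : ∃ e ∈ C, G.IsLoopEdge e
    · obtain ⟨e, heC, he⟩ := hloop
      exact .inl ⟨e, he, hC.eq_singleton_of_isLoopEdge heC he⟩
    · push Not at hloop
      obtain ⟨e, f, hef, rfl⟩ := ncard_eq_two.mp (hC.ncard_eq_two hV hloop)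
      exact .inr ⟨e, f, hef, hloop e (.inl rfl), hloop f (.inr rfl), rfl⟩
  · rintro (⟨e, he, rfl⟩ | ⟨e, f, hef, he, hf, rfl⟩)
    exacts [G.isCycle_singleton he, G.isCycle_pair hV hef he hf]

theorem deg_singleton_of_isLink (he : G.IsLink e) (w : V) : G.deg {e} w = 1 := by
  rw [deg_eq_ncard_of_forall_isLink G hV (toFinite _) (by simpa using he), ncard_singleton]

theorem ends_singleton (he : G.IsLink e) : G.Ends {e} = {G.fst e, G.snd e} := by
  ext w
  exact iff_of_true
    ⟨G.mem_vSet_of_isLink hV he (mem_singleton e) w, G.deg_singleton_of_isLink hV he w⟩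
    (he.eq_or_eq hV w)

theorem isPath_singleton (he : G.IsLink e) : G.IsPath {e} := by
  refine ⟨toFinite _, singleton_nonempty e, ?_, fun w _ => ?_, ?_⟩
  · rintro f g rfl rfl
    exact .refl
  · rw [G.deg_singleton_of_isLink hV he]
    omega
  · rw [G.ends_singleton hV he, ncard_pair he]

theorem exists_isLink_eq_singleton_of_deg_eq_one {P : Set E} (hP : P.Finite) {u v : V}
    (huv : u ≠ v) (hu : G.deg P u = 1) (hv : G.deg P v = 1) : ∃ g, G.IsLink g ∧ P = {g} := by
  have := G.deg_add_deg_eq_two_mul_ncard hV hP huv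
  obtain ⟨g, rfl⟩ := ncard_eq_one.mp (by omega : P.ncard = 1)
  refine ⟨g, fun hg => ?_, rfl⟩
  have h2 := G.deg_singleton_of_isLoopEdge hg
  obtain h | h := (hV (G.fst g) u v).imp_right (Or.resolve_right · huv) <;> rw [h] at h2 <;> omega

theorem IsCycle.exists_eq_singleton_of_disjoint_vSet {G : MultiGraph V E} {C₁ C₂ : Set E}
    (h₁ : G.IsCycle C₁) (h₂ : G.IsCycle C₂) (hdisj : Disjoint (G.VSet C₁) (G.VSet C₂)) :
    ∃ e, G.IsLoopEdge e ∧ C₁ = {e} := by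
  rcases (G.isCycle_iff hV).mp h₁ with h | ⟨e, f, -, he, -, rfl⟩
  · exact h
  · obtain ⟨x, hx⟩ := h₂.2.1
    exact (disjoint_left.mp hdisj (G.mem_vSet_of_isLink hV he (.inl rfl) (G.fst x))
      ⟨x, hx, .inl rfl⟩).elim

end TwoVertices

end MultiGraph

section TwoClasses

variable {E : Type u} (r : E → E → Prop) (a b : E)

open Classical in
/-- The class of `a` becomes loops at `⟨false⟩`, the class of `b` loops at `⟨true⟩`, and every
other edge joins the two vertices. -/
noncomputable def twoClassGraph : MultiGraph (ULift.{u} Bool) E where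
  fst e := ⟨decide (r b e)⟩
  snd e := ⟨!decide (r a e)⟩

noncomputable def twoClassBiasedGraph : BiasedGraph (ULift.{u} Bool) E where
  toMultiGraph := twoClassGraph r a b
  Balanced := {C | ∃ e f, e ≠ f ∧ (twoClassGraph r a b).IsLink e ∧
    (twoClassGraph r a b).IsLink f ∧ r e f ∧ C = {e, f}}

end TwoClasses

namespace twoClassGraph

open MultiGraph

variable {E : Type u} {r : E → E → Prop} {a b e f : E}

theorem fst_eq_and_snd_eq (hr : Equivalence r) (h : r e f) :
    (twoClassGraph r a b).fst e = (twoClassGraph r a b).fst f ∧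
      (twoClassGraph r a b).snd e = (twoClassGraph r a b).snd f := by
  have hiff : ∀ c, r c e ↔ r c f := fun c => ⟨(hr.trans · h), (hr.trans · (hr.symm h))⟩
  simp [twoClassGraph, hiff]

theorem isLoopEdge_of_rel (hr : Equivalence r) (he : (twoClassGraph r a b).IsLoopEdge e)
    (h : r e f) : (twoClassGraph r a b).IsLoopEdge f := by
  obtain ⟨h₁, h₂⟩ := fst_eq_and_snd_eq (a := a) (b := b) hr h
  exact h₁.symm.trans (he.trans h₂)

theorem isLoopEdge_iff (hr : Equivalence r) (hab : ¬ r a b) :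
    (twoClassGraph r a b).IsLoopEdge e ↔ r a e ∨ r b e := by
  have hnot : ¬ (r a e ∧ r b e) := fun h => hab (hr.trans h.1 (hr.symm h.2))
  by_cases ha : r a e <;> by_cases hb : r b e <;> simp_all [IsLoopEdge, twoClassGraph]

theorem fst_eq_fst_iff (hr : Equivalence r) (hab : ¬ r a b)
    (he : (twoClassGraph r a b).IsLoopEdge e) (hf : (twoClassGraph r a b).IsLoopEdge f) :
    (twoClassGraph r a b).fst e = (twoClassGraph r a b).fst f ↔ r e f := by
  refine ⟨fun h => ?_, fun h => (fst_eq_and_snd_eq hr h).1⟩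
  rw [isLoopEdge_iff hr hab] at he hf
  simp only [twoClassGraph, ULift.up.injEq, decide_eq_decide] at h
  by_cases hbe : r b e
  · exact hr.trans (hr.symm hbe) (h.mp hbe)
  · exact hr.trans (hr.symm (he.resolve_right hbe)) (hf.resolve_right (mt h.mpr hbe))

end twoClassGraph

namespace twoClassBiasedGraph

open MultiGraph BiasedGraph

variable {E : Type u} {r : E → E → Prop} {a b e f g : E} {C X : Set E}

theorem toMultiGraph_eq : (twoClassBiasedGraph r a b).toMultiGraph = twoClassGraph r a b := rfl

theorem isLink_of_mem_balanced (hC : C ∈ (twoClassBiasedGraph r a b).Balanced) (he : e ∈ C) :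
    (twoClassGraph r a b).IsLink e := by
  obtain ⟨x, y, -, hx, hy, -, rfl⟩ := hC
  rcases he with rfl | rfl <;> assumption

theorem rel_of_mem_balanced (hr : Equivalence r) (hC : C ∈ (twoClassBiasedGraph r a b).Balanced)
    (he : e ∈ C) (hf : f ∈ C) : r e f := by
  obtain ⟨x, y, -, -, -, hxy, rfl⟩ := hC
  rcases he with rfl | rfl <;> rcases hf with rfl | rfl
  exacts [hr.refl _, hxy, hr.symm hxy, hr.refl _]

theorem singleton_not_mem_balanced : {e} ∉ (twoClassBiasedGraph r a b).Balanced := by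
  rintro ⟨x, y, hxy, -, -, -, h⟩
  have hx : x ∈ ({e} : Set E) := h ▸ mem_insert x {y}
  have hy : y ∈ ({e} : Set E) := h ▸ mem_insert_of_mem x rfl
  exact hxy (hx.trans hy.symm)

theorem isUnbalancedCycle_singleton (he : (twoClassGraph r a b).IsLoopEdge e) :
    (twoClassBiasedGraph r a b).IsUnbalancedCycle {e} :=
  ⟨isCycle_singleton _ he, singleton_not_mem_balanced⟩

theorem isUnbalancedCycle_pair (hr : Equivalence r) (he : (twoClassGraph r a b).IsLink e)
    (hf : (twoClassGraph r a b).IsLink f) (h : ¬ r e f) :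
    (twoClassBiasedGraph r a b).IsUnbalancedCycle {e, f} :=
  ⟨isCycle_pair _ ULift.bool_eq_or_eq_or_eq (fun hef => h (hef ▸ hr.refl e)) he hf,
    fun hb => h (rel_of_mem_balanced hr hb (.inl rfl) (.inr rfl))⟩

theorem not_rel_of_isUnbalancedCycle_pair (hef : e ≠ f) (he : (twoClassGraph r a b).IsLink e)
    (hf : (twoClassGraph r a b).IsLink f)
    (h : (twoClassBiasedGraph r a b).IsUnbalancedCycle {e, f}) : ¬ r e f :=
  fun h' => h.2 ⟨e, f, hef, he, hf, h', rfl⟩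

theorem isRankTwoCircuit_of_isContraTheta
    (hX : (twoClassBiasedGraph r a b).IsContraTheta X) : IsRankTwoCircuit r X := by
  obtain ⟨C₁, C₂, C₃, hu₁, hu₂, hu₃, rfl, rfl⟩ := hX
  have hV := ULift.bool_eq_or_eq_or_eq
  have hlink₁ : ∀ e ∈ C₁, (twoClassGraph r a b).IsLink e := fun e he =>
    hu₁.1.not_isLoopEdge_of_isCycle_symmDiff hu₂.1 hu₃.1 he
  have hlink₂ : ∀ e ∈ C₂, (twoClassGraph r a b).IsLink e := fun e he =>
    hu₂.1.not_isLoopEdge_of_isCycle_symmDiff hu₁.1 (symmDiff_comm C₁ C₂ ▸ hu₃.1) he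
  have hlink₃ : ∀ e ∈ symmDiff C₁ C₂, (twoClassGraph r a b).IsLink e := fun e he =>
    hu₃.1.not_isLoopEdge_of_isCycle_symmDiff hu₂.1
      (by rw [symmDiff_symmDiff_cancel_right]; exact hu₁.1) he
  obtain ⟨w, x, y, hxw, hyw, hxy, rfl, rfl, h₃⟩ := exists_eq_pair_of_ncard_symmDiff
    (hu₁.1.ncard_eq_two hV hlink₁) (hu₂.1.ncard_eq_two hV hlink₂) (hu₃.1.ncard_eq_two hV hlink₃)
  rw [h₃] at hu₃ hlink₃
  refine .inr ⟨w, x, y,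
    not_rel_of_isUnbalancedCycle_pair hxw.symm (hlink₁ w (.inl rfl)) (hlink₁ x (.inr rfl)) hu₁,
    not_rel_of_isUnbalancedCycle_pair hyw.symm (hlink₂ w (.inl rfl)) (hlink₂ y (.inr rfl)) hu₂,
    not_rel_of_isUnbalancedCycle_pair hxy (hlink₃ x (.inl rfl)) (hlink₃ y (.inr rfl)) hu₃, ?_⟩
  ext
  simp only [mem_union, mem_insert_iff, mem_singleton_iff]
  tauto

theorem isRankTwoCircuit_singleton_union_pair (hr : Equivalence r)
    (he : (twoClassGraph r a b).IsLoopEdge e) (hf : (twoClassGraph r a b).IsLink f)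
    (hg : (twoClassGraph r a b).IsLink g) (hfg : ¬ r f g) : IsRankTwoCircuit r ({e} ∪ {f, g}) :=
  .inr ⟨e, f, g, fun h => hf (twoClassGraph.isLoopEdge_of_rel hr he h),
    fun h => hg (twoClassGraph.isLoopEdge_of_rel hr he h), hfg, singleton_union⟩

theorem isRankTwoCircuit_of_isTightHandcuff (hr : Equivalence r) (hab : ¬ r a b)
    (hX : (twoClassBiasedGraph r a b).IsTightHandcuff X) : IsRankTwoCircuit r X := by
  have hV := ULift.bool_eq_or_eq_or_eq
  obtain ⟨C₁, C₂, hu₁, hu₂, hdisj, ⟨v, hv⟩, rfl⟩ := hX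
  rcases ((twoClassGraph r a b).isCycle_iff hV).mp hu₁.1 with
    ⟨e, he, rfl⟩ | ⟨e₁, e₂, he, hl₁, hl₂, rfl⟩ <;>
  rcases ((twoClassGraph r a b).isCycle_iff hV).mp hu₂.1 with
    ⟨f, hf, rfl⟩ | ⟨f₁, f₂, hf, hk₁, hk₂, rfl⟩
  · have hv' : v ∈ (twoClassGraph r a b).VSet {e} ∩ (twoClassGraph r a b).VSet {f} := hv ▸ rfl
    rw [vSet_singleton_of_isLoopEdge _ he, vSet_singleton_of_isLoopEdge _ hf] at hv'
    exact .inl ⟨e, f, disjoint_singleton.mp hdisj,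
      (twoClassGraph.fst_eq_fst_iff hr hab he hf).mp (hv'.1.symm.trans hv'.2), singleton_union⟩
  · exact isRankTwoCircuit_singleton_union_pair hr he hk₁ hk₂
      (not_rel_of_isUnbalancedCycle_pair hf hk₁ hk₂ hu₂)
  · rw [union_comm]
    exact isRankTwoCircuit_singleton_union_pair hr hf hl₁ hl₂
      (not_rel_of_isUnbalancedCycle_pair he hl₁ hl₂ hu₁)
  · have hmem : ∀ w, w = v := fun w => by
      rw [← mem_singleton_iff, ← hv]
      exact ⟨mem_vSet_of_isLink _ hV hl₁ (.inl rfl) w, mem_vSet_of_isLink _ hV hk₁ (.inl rfl) w⟩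
    exact (hl₁ ((hmem _).trans (hmem _).symm)).elim

theorem isRankTwoCircuit_of_isLooseHandcuff (hr : Equivalence r) (hab : ¬ r a b)
    (hX : (twoClassBiasedGraph r a b).IsLooseHandcuff X) : IsRankTwoCircuit r X := by
  have hV := ULift.bool_eq_or_eq_or_eq
  obtain ⟨C₁, C₂, P, hu₁, hu₂, hdisj, hP, -, ⟨p, q, hpq, hends, hp, hq⟩, rfl⟩ := hX
  obtain ⟨e, he, rfl⟩ := hu₁.1.exists_eq_singleton_of_disjoint_vSet hV hu₂.1 hdisj
  obtain ⟨f, hf, rfl⟩ := hu₂.1.exists_eq_singleton_of_disjoint_vSet hV hu₁.1 hdisj.symm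
  rw [vSet_singleton_of_isLoopEdge _ he] at hdisj hp
  rw [vSet_singleton_of_isLoopEdge _ hf] at hdisj hq
  obtain rfl : p = (twoClassGraph r a b).fst e := (hp ▸ mem_singleton p).2
  obtain rfl : q = (twoClassGraph r a b).fst f := (hq ▸ mem_singleton q).2
  have hdeg : ∀ w ∈ ({(twoClassGraph r a b).fst e, (twoClassGraph r a b).fst f} : Set _),
      (twoClassGraph r a b).deg P w = 1 := fun w hw => (hends ▸ hw).2
  obtain ⟨g, hg, rfl⟩ := exists_isLink_eq_singleton_of_deg_eq_one _ hV hP.1 hpq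
    (hdeg _ (.inl rfl)) (hdeg _ (.inr rfl))
  refine .inr ⟨e, f, g, fun h => hpq ((twoClassGraph.fst_eq_fst_iff hr hab he hf).mpr h),
    fun h => hg (twoClassGraph.isLoopEdge_of_rel hr he h),
    fun h => hg (twoClassGraph.isLoopEdge_of_rel hr hf h), ?_⟩
  ext
  simp only [mem_union, mem_insert_iff, mem_singleton_iff]
  tauto

theorem isRankTwoCircuit_of_frameCircuit (hr : Equivalence r) (hab : ¬ r a b)
    (hX : (twoClassBiasedGraph r a b).FrameCircuit X) : IsRankTwoCircuit r X := by
  rcases hX with ⟨-, e, f, hef, -, -, h, rfl⟩ | hX | hX | hX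
  · exact .inl ⟨e, f, hef, h, rfl⟩
  · exact isRankTwoCircuit_of_isContraTheta hX
  · exact isRankTwoCircuit_of_isTightHandcuff hr hab hX
  · exact isRankTwoCircuit_of_isLooseHandcuff hr hab hX

theorem frameCircuit_pair (hr : Equivalence r) (hef : e ≠ f) (h : r e f) :
    (twoClassBiasedGraph r a b).FrameCircuit {e, f} := by
  by_cases he : (twoClassGraph r a b).IsLoopEdge e
  · have hf := twoClassGraph.isLoopEdge_of_rel hr he h
    refine .inr (.inr (.inl ⟨{e}, {f}, isUnbalancedCycle_singleton he,
      isUnbalancedCycle_singleton hf, disjoint_singleton.mpr hef, ⟨(twoClassGraph r a b).fst e, ?_⟩,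
      singleton_union.symm⟩))
    rw [toMultiGraph_eq, vSet_singleton_of_isLoopEdge _ he, vSet_singleton_of_isLoopEdge _ hf,
      (twoClassGraph.fst_eq_and_snd_eq hr h).1, inter_self]
  · have hf : (twoClassGraph r a b).IsLink f := fun hf =>
      he (twoClassGraph.isLoopEdge_of_rel hr hf (hr.symm h))
    exact .inl ⟨isCycle_pair _ ULift.bool_eq_or_eq_or_eq hef he hf, e, f, hef, he, hf, h, rfl⟩

theorem frameCircuit_triple_of_isLink (hr : Equivalence r) (he : (twoClassGraph r a b).IsLink e)
    (hf : (twoClassGraph r a b).IsLink f) (hg : (twoClassGraph r a b).IsLink g) (hef : ¬ r e f)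
    (heg : ¬ r e g) (hfg : ¬ r f g) : (twoClassBiasedGraph r a b).FrameCircuit {e, f, g} := by
  have hne : ∀ {x y}, ¬ r x y → x ≠ y := fun h hxy => h (hxy ▸ hr.refl _)
  have := hne hef
  have := hne heg
  have := hne hfg
  refine .inr (.inl ⟨{e, f}, {e, g}, {f, g}, isUnbalancedCycle_pair hr he hf hef,
    isUnbalancedCycle_pair hr he hg heg, isUnbalancedCycle_pair hr hf hg hfg, ?_, ?_⟩) <;>
  · ext x
    simp only [mem_symmDiff, mem_union, mem_insert_iff, mem_singleton_iff]
    grind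

theorem frameCircuit_triple_of_isLoopEdge_of_isLink (hr : Equivalence r)
    (he : (twoClassGraph r a b).IsLoopEdge e) (hf : (twoClassGraph r a b).IsLink f)
    (hg : (twoClassGraph r a b).IsLink g) (hfg : ¬ r f g) :
    (twoClassBiasedGraph r a b).FrameCircuit {e, f, g} := by
  refine .inr (.inr (.inl ⟨{e}, {f, g}, isUnbalancedCycle_singleton he,
    isUnbalancedCycle_pair hr hf hg hfg,
    disjoint_singleton_left.mpr (by rintro (rfl | rfl) <;> contradiction),
    ⟨(twoClassGraph r a b).fst e, ?_⟩, singleton_union.symm⟩))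
  rw [toMultiGraph_eq, inter_eq_left.mpr fun w _ =>
    mem_vSet_of_isLink _ ULift.bool_eq_or_eq_or_eq hf (.inl rfl) w,
    vSet_singleton_of_isLoopEdge _ he]

theorem frameCircuit_triple_of_isLoopEdge_of_isLoopEdge (hr : Equivalence r) (hab : ¬ r a b)
    (he : (twoClassGraph r a b).IsLoopEdge e) (hf : (twoClassGraph r a b).IsLoopEdge f)
    (hg : (twoClassGraph r a b).IsLink g) (hef : ¬ r e f) :
    (twoClassBiasedGraph r a b).FrameCircuit {e, f, g} := by
  have hV := ULift.bool_eq_or_eq_or_eq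
  have hne := mt (twoClassGraph.fst_eq_fst_iff hr hab he hf).mp hef
  have hvg : ∀ w, w ∈ (twoClassGraph r a b).VSet {g} := mem_vSet_of_isLink _ hV hg rfl
  refine .inr (.inr (.inr ⟨{e}, {f}, {g}, isUnbalancedCycle_singleton he,
    isUnbalancedCycle_singleton hf, ?_, isPath_singleton _ hV hg,
    disjoint_singleton_left.mpr (by rintro (rfl | rfl) <;> contradiction),
    ⟨_, _, hne, ?_, ?_, ?_⟩, ?_⟩))
  · rw [toMultiGraph_eq, vSet_singleton_of_isLoopEdge _ he, vSet_singleton_of_isLoopEdge _ hf]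
    exact disjoint_singleton.mpr hne
  · rw [toMultiGraph_eq, ends_singleton _ hV hg, pair_eq_univ hV hg, pair_eq_univ hV hne]
  · rw [toMultiGraph_eq, inter_eq_right.mpr fun w _ => hvg w, vSet_singleton_of_isLoopEdge _ he]
  · rw [toMultiGraph_eq, inter_eq_right.mpr fun w _ => hvg w, vSet_singleton_of_isLoopEdge _ hf]
  · ext
    simp only [mem_union, mem_insert_iff, mem_singleton_iff]
    tauto

theorem not_isLoopEdge_of_not_rel (hr : Equivalence r) (hab : ¬ r a b)
    (he : (twoClassGraph r a b).IsLoopEdge e) (hf : (twoClassGraph r a b).IsLoopEdge f)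
    (hef : ¬ r e f) (heg : ¬ r e g) (hfg : ¬ r f g) : ¬ (twoClassGraph r a b).IsLoopEdge g := by
  intro hg
  rcases ULift.bool_eq_or_eq_or_eq ((twoClassGraph r a b).fst e) ((twoClassGraph r a b).fst f)
    ((twoClassGraph r a b).fst g) with h | h | h
  exacts [hef ((twoClassGraph.fst_eq_fst_iff hr hab he hf).mp h),
    heg ((twoClassGraph.fst_eq_fst_iff hr hab he hg).mp h),
    hfg ((twoClassGraph.fst_eq_fst_iff hr hab hf hg).mp h)]

theorem frameCircuit_triple (hr : Equivalence r) (hab : ¬ r a b) (hef : ¬ r e f) (heg : ¬ r e g)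
    (hfg : ¬ r f g) : (twoClassBiasedGraph r a b).FrameCircuit {e, f, g} := by
  by_cases he : (twoClassGraph r a b).IsLoopEdge e <;>
  by_cases hf : (twoClassGraph r a b).IsLoopEdge f <;>
  by_cases hg : (twoClassGraph r a b).IsLoopEdge g
  · exact absurd hg (not_isLoopEdge_of_not_rel hr hab he hf hef heg hfg)
  · exact frameCircuit_triple_of_isLoopEdge_of_isLoopEdge hr hab he hf hg hef
  · rw [pair_comm]
    exact frameCircuit_triple_of_isLoopEdge_of_isLoopEdge hr hab he hg hf heg
  · exact frameCircuit_triple_of_isLoopEdge_of_isLink hr he hf hg hfg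
  · rw [insert_comm, pair_comm]
    exact frameCircuit_triple_of_isLoopEdge_of_isLoopEdge hr hab hf hg he hfg
  · rw [insert_comm]
    exact frameCircuit_triple_of_isLoopEdge_of_isLink hr hf he hg heg
  · rw [pair_comm, insert_comm]
    exact frameCircuit_triple_of_isLoopEdge_of_isLink hr hg he hf hef
  · exact frameCircuit_triple_of_isLink hr he hf hg hef heg hfg

theorem frameCircuit_iff (hr : Equivalence r) (hab : ¬ r a b) :
    (twoClassBiasedGraph r a b).FrameCircuit X ↔ IsRankTwoCircuit r X := by
  refine ⟨isRankTwoCircuit_of_frameCircuit hr hab, ?_⟩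
  rintro (⟨e, f, hef, h, rfl⟩ | ⟨e, f, g, hef, heg, hfg, rfl⟩)
  exacts [frameCircuit_pair hr hef h, frameCircuit_triple hr hab hef heg hfg]

theorem thetaProperty (hr : Equivalence r) : (twoClassBiasedGraph r a b).ThetaProperty := by
  have hV := ULift.bool_eq_or_eq_or_eq
  refine ⟨?_, ?_⟩
  · rintro C ⟨e, f, hef, he, hf, -, rfl⟩
    exact isCycle_pair _ hV hef he hf
  rintro C₁ C₂ C₃ h₁ h₂ h₃ rfl hb₁ hb₂
  have hlink₃ : ∀ e ∈ symmDiff C₁ C₂, (twoClassGraph r a b).IsLink e := fun e he =>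
    (mem_symmDiff.mp he).elim (fun h => isLink_of_mem_balanced hb₁ h.1)
      (fun h => isLink_of_mem_balanced hb₂ h.1)
  obtain ⟨w, x, y, -, -, hxy, rfl, rfl, h⟩ := exists_eq_pair_of_ncard_symmDiff
    (h₁.ncard_eq_two hV fun _ => isLink_of_mem_balanced hb₁)
    (h₂.ncard_eq_two hV fun _ => isLink_of_mem_balanced hb₂) (h₃.ncard_eq_two hV hlink₃)
  rw [h] at hlink₃ ⊢
  exact ⟨x, y, hxy, hlink₃ x (.inl rfl), hlink₃ y (.inr rfl),
    hr.trans (rel_of_mem_balanced hr hb₁ (.inr rfl) (.inl rfl))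
      (rel_of_mem_balanced hr hb₂ (.inl rfl) (.inr rfl)), rfl⟩

end twoClassBiasedGraph

theorem stmt_13 {α : Type*} (N : Matroid α) (hr : N.eRk' N.E = 2)
    (hloopless : ∀ e ∈ N.E, N.Indep {e}) (L : Set α) (hL : L.encard = 2)
    (hLi : N.Indep L) :
    N.IsFrameMatroidal L := by
  obtain ⟨a, b, hab, rfl⟩ := encard_eq_two.mp hL
  have hrank : ∀ I, N.Indep I → I.encard ≤ 2 := fun I hI => hr ▸ hI.encard_le_eRk' hI.subset_ground
  have hpar := Matroid.parallel'_equivalence hloopless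
  let a' : N.E := ⟨a, hLi.subset_ground (.inl rfl)⟩
  let b' : N.E := ⟨b, hLi.subset_ground (.inr rfl)⟩
  have hab' : ¬ N.Parallel' a' b' :=
    Matroid.not_parallel'_iff.mpr ⟨fun h => hab (congrArg Subtype.val h), hLi⟩
  refine ⟨ULift Bool, twoClassBiasedGraph N.Parallel' a' b',
    ⟨twoClassBiasedGraph.thetaProperty hpar, fun X => ?_⟩, fun e he => ?_⟩
  · rw [Matroid.circuit'_image_iff hrank hloopless, twoClassBiasedGraph.frameCircuit_iff hpar hab']
  · refine ⟨(twoClassGraph.isLoopEdge_iff hpar hab').mpr ?_,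
      twoClassBiasedGraph.singleton_not_mem_balanced⟩
    rcases he with he | he
    · exact .inl (.inl (Subtype.ext he).symm)
    · exact .inr (.inl (Subtype.ext (mem_singleton_iff.mp he)).symm)
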